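/- arXiv:2203.10641 — 2 statements merged into one kernel-verified Lean document; each statement's English description precedes it below -/
import Mathlib

section
/- Let Γ be a finite n-valent GKM graph of rank k with axial function α : directed edges → ℤ^k satisfying α(q,p) = −α(p,q), and let F be a subgraph closed under a connection θ (for every edge (p,q) of F, θ_{(p,q)} maps star(p) ∩ F bijectively onto star(q) ∩ F), with the connection satisfying α(θ_{(p,q)} e) − α(e) ∈ ℤ·α(p,q) for all e ∈ star(p). Define τ_F : V → ℤ[x_1,…,x_k] by τ_F(p) = ∏_{e ∈ star(p), e ∉ F} ℓ_{α(e)} if p ∈ F and τ_F(p) = 0 otherwise, where ℓ_β denotes the linear form ∑ β_i x_i. Then for every edge (p,q) of Γ, τ_F(p) ≡ τ_F(q) modulo the ideal (ℓ_{α(p,q)}). -/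
open scoped Classical

/-- A connection on a graph. -/
structure SimpleGraph.Connection {V : Type} (G : SimpleGraph V) where
  θ : ∀ ⦃p q : V⦄, G.Adj p q → (G.neighborSet p ≃ G.neighborSet q)
  fix : ∀ ⦃p q : V⦄ (h : G.Adj p q), θ h ⟨q, h⟩ = ⟨p, h.symm⟩
  symm : ∀ ⦃p q : V⦄ (h : G.Adj p q), θ h.symm = (θ h).symm

/-- The linear form `ℓ_β = ∑ β_i x_i` in `ℤ[x_1,…,x_k]` associated with `β ∈ ℤ^k`. -/
noncomputable def linForm (k : ℕ) (β : Fin k → ℤ) : MvPolynomial (Fin k) ℤ :=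
  ∑ i : Fin k, MvPolynomial.C (β i) * MvPolynomial.X i

/-- The Thom class of a subgraph `F`: at a vertex `p` of `F` it is the product of the
linear forms of the labels of the edges at `p` transversal to `F`, and it is `0` at
vertices not in `F`. -/
noncomputable def thomClass {V : Type} [Fintype V] {G : SimpleGraph V}
    (k : ℕ) (α : V → V → (Fin k → ℤ)) (F : G.Subgraph) (p : V) :
    MvPolynomial (Fin k) ℤ :=
  if p ∈ F.verts then
    ∏ q ∈ Finset.univ.filter (fun q => G.Adj p q ∧ ¬ F.Adj p q), linForm k (α p q)
  else 0

/-! Idea: if the edge `pq` is transversal to `F`, then `ℓ_{α(p,q)}` is a factor of `τ_F(p)`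
and (as `ℓ_{α(q,p)} = -ℓ_{α(p,q)}`) divides `τ_F(q)`. If `pq` lies in `F`, the connection
`θ_{(p,q)}` matches the edges at `p` transversal to `F` with those at `q`, and the labels of
matched edges differ by a multiple of `α(p,q)`, so the two products agree modulo `ℓ_{α(p,q)}`. -/

section LinForm

variable {k : ℕ}

lemma linForm_add (β γ : Fin k → ℤ) : linForm k (β + γ) = linForm k β + linForm k γ := by
  simp only [linForm, Pi.add_apply, map_add, add_mul, Finset.sum_add_distrib]

lemma linForm_smul (c : ℤ) (β : Fin k → ℤ) :
    linForm k (c • β) = MvPolynomial.C c * linForm k β := by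
  simp only [linForm, Pi.smul_apply, smul_eq_mul, map_mul, Finset.mul_sum, mul_assoc]

lemma linForm_neg (β : Fin k → ℤ) : linForm k (-β) = -linForm k β := by
  simpa using linForm_smul (-1) β

end LinForm

namespace SimpleGraph.Connection

variable {V : Type} {G : SimpleGraph V} (C : G.Connection)

/-- `F` is a totally geodesic face for `C`. -/
def Preserves (F : G.Subgraph) : Prop :=
  ∀ ⦃p q : V⦄ (h : G.Adj p q), F.Adj p q →
    ∀ e : G.neighborSet p, F.Adj p (e : V) → F.Adj q ((C.θ h e : V))

variable {C} {F : G.Subgraph} {p q : V}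

lemma Preserves.adj_θ_iff (hF : C.Preserves F) (h : G.Adj p q) (hpq : F.Adj p q)
    (e : G.neighborSet p) : F.Adj q (C.θ h e : V) ↔ F.Adj p e := by
  refine ⟨fun he => ?_, hF h hpq e⟩
  simpa [C.symm h] using hF h.symm hpq.symm (C.θ h e) he

def Preserves.transversalEquiv (hF : C.Preserves F) (h : G.Adj p q) (hpq : F.Adj p q) :
    {e : G.neighborSet p // ¬ F.Adj p e} ≃ {e : G.neighborSet q // ¬ F.Adj q e} :=
  (C.θ h).subtypeEquiv fun e => not_congr (hF.adj_θ_iff h hpq e).symm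

end SimpleGraph.Connection

section ThomClass

variable {V : Type} [Fintype V] {G : SimpleGraph V} {k : ℕ} {α : V → V → (Fin k → ℤ)}
  {F : G.Subgraph} {p q : V}

lemma thomClass_of_mem (hp : p ∈ F.verts) :
    thomClass k α F p = ∏ e : {e : G.neighborSet p // ¬ F.Adj p e}, linForm k (α p e) := by
  rw [thomClass, if_pos hp,
    Finset.prod_subtype (p := fun r => G.Adj p r ∧ ¬ F.Adj p r) _ fun r => by simp]
  exact Fintype.prod_equiv (Equiv.subtypeSubtypeEquivSubtypeInter (G.Adj p) _).symm _ _
    fun _ => rfl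

lemma linForm_dvd_thomClass (h : G.Adj p q) (hpq : ¬ F.Adj p q) :
    linForm k (α p q) ∣ thomClass k α F p := by
  unfold thomClass
  split_ifs
  · exact Finset.dvd_prod_of_mem _ (by simp [h, hpq])
  · exact dvd_zero _

lemma linForm_dvd_thomClass_sub_of_not_adj (hαsymm : ∀ p q : V, G.Adj p q → α q p = -α p q)
    (h : G.Adj p q) (hpq : ¬ F.Adj p q) :
    linForm k (α p q) ∣ thomClass k α F p - thomClass k α F q := by
  have hq : linForm k (α q p) ∣ thomClass k α F q :=
    linForm_dvd_thomClass h.symm fun hqp => hpq hqp.symm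
  rw [hαsymm p q h, linForm_neg, neg_dvd] at hq
  exact dvd_sub (linForm_dvd_thomClass h hpq) hq

lemma linForm_dvd_thomClass_sub_of_adj {C : G.Connection}
    (hcompat : ∀ ⦃p q : V⦄ (h : G.Adj p q) (e : G.neighborSet p),
      ∃ c : ℤ, α q ((C.θ h e : V)) = α p (e : V) + c • α p q)
    (hF : C.Preserves F) (h : G.Adj p q) (hpq : F.Adj p q) :
    linForm k (α p q) ∣ thomClass k α F p - thomClass k α F q := by
  have hfactor : ∀ e : G.neighborSet p,
      linForm k (α p e) ≡ linForm k (α q (C.θ h e)) [SMOD Ideal.span {linForm k (α p q)}] := by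
    intro e
    obtain ⟨c, hc⟩ := hcompat h e
    rw [SModEq.sub_mem, hc, linForm_add, linForm_smul, Ideal.mem_span_singleton]
    exact ⟨-MvPolynomial.C c, by ring⟩
  have hprod : thomClass k α F p ≡ thomClass k α F q [SMOD Ideal.span {linForm k (α p q)}] := by
    rw [thomClass_of_mem (F.edge_vert hpq), thomClass_of_mem (F.edge_vert hpq.symm),
      ← (hF.transversalEquiv h hpq).prod_comp]
    exact SModEq.prod fun e _ => hfactor e
  rwa [SModEq.sub_mem, Ideal.mem_span_singleton] at hprod

end ThomClass

theorem thomClass_gkm_congruence_general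
    {V : Type} [Fintype V] (G : SimpleGraph V)
    (k : ℕ)
    (α : V → V → (Fin k → ℤ))
    (hαsymm : ∀ p q : V, G.Adj p q → α q p = -α p q)
    (C : G.Connection)
    (hcompat : ∀ ⦃p q : V⦄ (h : G.Adj p q) (e : G.neighborSet p),
      ∃ c : ℤ, α q ((C.θ h e : V)) = α p (e : V) + c • α p q)
    (F : G.Subgraph)
    (hface : ∀ ⦃p q : V⦄ (h : G.Adj p q), F.Adj p q →
      ∀ e : G.neighborSet p, F.Adj p (e : V) → F.Adj q ((C.θ h e : V))) :
    ∀ p q : V, G.Adj p q →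
      ∃ g : MvPolynomial (Fin k) ℤ,
        thomClass k α F p - thomClass k α F q = linForm k (α p q) * g := by
  intro p q h
  by_cases hpq : F.Adj p q
  · exact linForm_dvd_thomClass_sub_of_adj hcompat hface h hpq
  · exact linForm_dvd_thomClass_sub_of_not_adj hαsymm h hpq

/-- For an `n`-valent GKM graph of rank `k` with axial function `α`
(satisfying `α(q,p) = -α(p,q)` and the connection congruence
`α(θ e) - α(e) ∈ ℤ·α(p,q)`), and a totally geodesic face `F` (a `θ`-closed subgraph),
the Thom class `τ_F` satisfies the GKM congruences: `τ_F(p) ≡ τ_F(q) mod (ℓ_{α(p,q)})`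
for every edge `(p,q)` of `Γ`. -/
theorem thomClass_gkm_congruence
    {V : Type} [Fintype V] [DecidableEq V] (G : SimpleGraph V)
    (n k : ℕ) (hreg : ∀ v : V, (G.neighborSet v).ncard = n)
    (α : V → V → (Fin k → ℤ))
    (hαsymm : ∀ p q : V, G.Adj p q → α q p = -α p q)
    (C : G.Connection)
    (hcompat : ∀ ⦃p q : V⦄ (h : G.Adj p q) (e : G.neighborSet p),
      ∃ c : ℤ, α q ((C.θ h e : V)) = α p (e : V) + c • α p q)
    (F : G.Subgraph)
    (hface : ∀ ⦃p q : V⦄ (h : G.Adj p q), F.Adj p q →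
      ∀ e : G.neighborSet p, F.Adj p (e : V) → F.Adj q ((C.θ h e : V))) :
    ∀ p q : V, G.Adj p q →
      ∃ g : MvPolynomial (Fin k) ℤ,
        thomClass k α F p - thomClass k α F q = linForm k (α p q) * g :=
  thomClass_gkm_congruence_general G k α hαsymm C hcompat F hface
end

section
/- Let Γ be a finite n-valent graph with connection θ and suppose every set of at most j−1 edges emanating from a common vertex spans a unique totally geodesic face (a connected θ-closed subgraph in which every vertex has exactly that many incident face edges), with j ≥ 4. Then for every 2-face Ξ (a cycle that is θ-closed) and every vertex p of Ξ, the monodromy of θ around Ξ based at p fixes every edge of star(p) not belonging to Ξ. -/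
/-- Monodromy of a connection along a walk. -/
def SimpleGraph.Connection.mono {V : Type} {G : SimpleGraph V} (C : G.Connection) :
    ∀ {a b : V}, G.Walk a b → (G.neighborSet a ≃ G.neighborSet b)
  | _, _, SimpleGraph.Walk.nil => Equiv.refl _
  | _, _, SimpleGraph.Walk.cons h w => (C.θ h).trans (C.mono w)

/-- A (totally geodesic) face of a graph with connection: a connected subgraph closed
under the connection along its own edges. -/
def SimpleGraph.Connection.IsFace {V : Type} {G : SimpleGraph V} (C : G.Connection)
    (H : G.Subgraph) : Prop :=
  H.Connected ∧ ∀ ⦃p q : V⦄ (h : G.Adj p q), H.Adj p q →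
    ∀ e : G.neighborSet p, H.Adj p (e : V) → H.Adj q ((C.θ h e : V))

/-- Key transport lemma: if `W` is a "cycle-like" subgraph (θ-closed, all degrees 2)
and `H` is a θ-closed subgraph, walking along a walk inside `W` transports `H`-edges
to `H`-edges, provided at the start both `W`-neighbors and the edge lie in `H`. -/
lemma transport_lemma {V : Type} [Fintype V] {G : SimpleGraph V} (C : G.Connection)
    (W H : G.Subgraph)
    (hWface : ∀ ⦃a b : V⦄ (h : G.Adj a b), W.Adj a b →
      ∀ e : G.neighborSet a, W.Adj a (e : V) → W.Adj b ((C.θ h e : V)))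
    (hHface : ∀ ⦃a b : V⦄ (h : G.Adj a b), H.Adj a b →
      ∀ e : G.neighborSet a, H.Adj a (e : V) → H.Adj b ((C.θ h e : V)))
    (hdeg : ∀ u ∈ W.verts, (W.neighborSet u).ncard = 2) :
    ∀ {b p : V} (u : G.Walk b p), u.toSubgraph ≤ W →
      ∀ f : G.neighborSet b, H.Adj b (f : V) → (∀ x : V, W.Adj b x → H.Adj b x) →
      H.Adj p ((C.mono u f : V)) := by
  intro b p u
  induction u with
  | nil =>
    intro _ f hf _
    simpa [SimpleGraph.Connection.mono] using hf
  | @cons b c p h u ih =>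
    intro hle f hf hI2
    have hWbc : W.Adj b c := hle.2 (by simp)
    have hule : u.toSubgraph ≤ W :=
      le_trans (le_sup_right : u.toSubgraph ≤ G.subgraphOfAdj h ⊔ u.toSubgraph) hle
    have hHbc : H.Adj b c := hI2 c hWbc
    have hf' : H.Adj c ((C.θ h f : V)) := hHface h hHbc f hf
    have hbW : b ∈ W.verts := hWbc.fst_mem
    have hcW : c ∈ W.verts := hWbc.symm.fst_mem
    have hSb : (W.neighborSet b).ncard = 2 := hdeg b hbW
    have hcmem : c ∈ W.neighborSet b := hWbc
    obtain ⟨x, hxS, hxc⟩ : ∃ x, x ∈ W.neighborSet b ∧ x ≠ c :=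
      Set.exists_ne_of_one_lt_ncard (by omega) c
    have hWbx : W.Adj b x := hxS
    have hGbx : G.Adj b x := hWbx.adj_sub
    have hWcx₂ : W.Adj c ((C.θ h ⟨x, hGbx⟩ : V)) := hWface h hWbc ⟨x, hGbx⟩ hWbx
    have hx₂b : ((C.θ h ⟨x, hGbx⟩ : V)) ≠ b := by
      intro hcontra
      have h1 : C.θ h ⟨x, hGbx⟩ = C.θ h ⟨c, h⟩ := by
        rw [C.fix h]
        exact Subtype.ext hcontra
      exact hxc (congrArg Subtype.val ((C.θ h).injective h1))
    -- the W-neighborhood of c is exactly {b, θ x}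
    have hSc : W.neighborSet c = {b, ((C.θ h ⟨x, hGbx⟩ : V))} := by
      refine (Set.eq_of_subset_of_ncard_le ?_ ?_ (Set.toFinite _)).symm
      · intro y hy
        rcases hy with hy | hy
        · subst hy; exact hWbc.symm
        · simp only [Set.mem_singleton_iff] at hy; subst hy; exact hWcx₂
      · rw [hdeg c hcW, Set.ncard_pair (Ne.symm hx₂b)]
    have hI2' : ∀ y : V, W.Adj c y → H.Adj c y := by
      intro y hy
      have hy' : y ∈ W.neighborSet c := hy
      rw [hSc] at hy'
      rcases hy' with hy' | hy'
      · subst hy'; exact hHbc.symm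
      · simp only [Set.mem_singleton_iff] at hy'
        subst hy'
        exact hHface h hHbc ⟨x, hGbx⟩ (hI2 x hWbx)
    exact ih hule (C.θ h f) hf' hI2'

/-- In a finite `n`-valent graph with connection in which every set of at
most `j-1` edges at a common vertex spans a unique totally geodesic face (`j ≥ 4`),
the monodromy around any 2-face fixes every transversal edge at its base vertex. -/
theorem monodromy_fixes_transversal_edges
    {V : Type} [Fintype V] (G : SimpleGraph V) (C : G.Connection)
    (n j : ℕ) (hj : 4 ≤ j)
    (hreg : ∀ v : V, (G.neighborSet v).ncard = n)
    (hspan : ∀ (p : V) (E₀ : Set V), E₀ ⊆ G.neighborSet p → E₀.ncard ≤ j - 1 →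
      ∃! H : G.Subgraph, C.IsFace H ∧ p ∈ H.verts ∧ H.neighborSet p = E₀ ∧
        ∀ v ∈ H.verts, (H.neighborSet v).ncard = E₀.ncard) :
    ∀ (p : V) (w : G.Walk p p), w.IsCycle → C.IsFace w.toSubgraph →
      (∀ u ∈ w.toSubgraph.verts, (w.toSubgraph.neighborSet u).ncard = 2) →
      ∀ e : G.neighborSet p, ¬ w.toSubgraph.Adj p (e : V) → C.mono w e = e := by
  intro p w hcyc hWface hdeg e he
  set W := w.toSubgraph with hW
  have hpmem : p ∈ W.verts := by
    rw [hW, SimpleGraph.Walk.mem_verts_toSubgraph]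
    exact w.start_mem_support
  have hNp : (W.neighborSet p).ncard = 2 := hdeg p hpmem
  set E₀ : Set V := insert (e : V) (W.neighborSet p) with hE₀
  have hE₀sub : E₀ ⊆ G.neighborSet p := by
    rw [hE₀]
    refine Set.insert_subset e.2 ?_
    intro x hx
    exact (hx : W.Adj p x).adj_sub
  have hE₀card : E₀.ncard ≤ j - 1 := by
    have h1 : E₀.ncard ≤ (W.neighborSet p).ncard + 1 :=
      Set.ncard_insert_le _ _
    omega
  obtain ⟨H, ⟨⟨hconn, hHface⟩, hpH, hHnb, hHdeg⟩, -⟩ := hspan p E₀ hE₀sub hE₀card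
  have hHe : H.Adj p (e : V) := by
    have : (e : V) ∈ H.neighborSet p := by
      rw [hHnb]; exact Set.mem_insert _ _
    exact this
  have hI2 : ∀ x : V, W.Adj p x → H.Adj p x := by
    intro x hx
    have : x ∈ H.neighborSet p := by
      rw [hHnb]; exact Set.mem_insert_of_mem _ hx
    exact this
  have key : H.Adj p ((C.mono w e : V)) :=
    transport_lemma C W H hWface.2 hHface hdeg w le_rfl e hHe hI2
  have key2 : ∀ g : G.neighborSet p, W.Adj p (g : V) → W.Adj p ((C.mono w g : V)) :=
    fun g hg =>
      transport_lemma C W W hWface.2 hWface.2 hdeg w le_rfl g hg (fun _ hx => hx)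
  -- monodromy permutes the W-neighbors of p among themselves
  set N : Set (G.neighborSet p) := {g | W.Adj p (g : V)} with hN
  have himg : (C.mono w) '' N = N := by
    refine Set.eq_of_subset_of_ncard_le ?_ ?_ (Set.toFinite _)
    · rintro y ⟨g, hg, rfl⟩
      exact key2 g hg
    · rw [Set.ncard_image_of_injective N (C.mono w).injective]
  have hfnotN : C.mono w e ∉ N := by
    intro hfN
    rw [← himg] at hfN
    obtain ⟨g, hgN, hge⟩ := hfN
    exact he (by rwa [(C.mono w).injective hge] at hgN)
  have hmem : ((C.mono w e : G.neighborSet p) : V) ∈ E₀ := by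
    rw [← hHnb]; exact key
  rw [hE₀] at hmem
  rcases hmem with hmem | hmem
  · exact Subtype.ext hmem
  · exact absurd hmem hfnotN
end
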